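/- arXiv:2011.14287 — 4 statements merged into one kernel-verified Lean document; each statement's English description precedes it below -/
import Mathlib

section
/- Let n ≥ 1, let ψ : ℝⁿ → ℂ be twice continuously differentiable on a neighbourhood of x ∈ ℝⁿ, and let ε > 0. Then the function ψ_ε(y) := √(|ψ(y)|² + ε²) is twice continuously differentiable near x and satisfies the pointwise regularised Kato inequality ψ_ε(x) · Δψ_ε(x) ≥ Re( conj(ψ(x)) · Δψ(x) ). -/
/-!
Put `f = √(‖u‖² + ε²)`, so that `f² = ‖u‖² + ε²`. Differentiating this identity once and twice
along a direction `e` gives `f ∂f = ⟪u, ∂u⟫` and `f ∂²f + (∂f)² = ⟪u, ∂²u⟫ + ‖∂u‖²`. Since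
`‖u‖ ≤ f`, Cauchy–Schwarz turns the first identity into `|∂f| ≤ ‖∂u‖`, and the second then yields
`f ∂²f ≥ ⟪u, ∂²u⟫`. Summing over the coordinate directions gives the inequality for the Laplacians,
as `⟪ψ, Δψ⟫_ℝ = Re (conj ψ · Δψ)` for complex `ψ`.
-/

open Complex

/-- The Euclidean Laplacian `Δf(x) = ∑ i, ∂²f/∂x_i²(x)` (analyst's sign convention). -/
noncomputable def eucLap {n : ℕ} {E : Type*} [NormedAddCommGroup E] [NormedSpace ℝ E]
    (f : EuclideanSpace ℝ (Fin n) → E) (x : EuclideanSpace ℝ (Fin n)) : E :=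
  ∑ i : Fin n,
    fderiv ℝ (fun y => fderiv ℝ f y (EuclideanSpace.single i (1 : ℝ))) x
      (EuclideanSpace.single i (1 : ℝ))

open scoped RealInnerProductSpace

section

variable {E F : Type*} [NormedAddCommGroup E] [NormedSpace ℝ E]
  [NormedAddCommGroup F] [InnerProductSpace ℝ F] {u : E → F} {x : E}

theorem fderiv_norm_sq_comp_apply (hu : DifferentiableAt ℝ u x) (e : E) :
    fderiv ℝ (fun y => ‖u y‖ ^ 2) x e = 2 * ⟪u x, fderiv ℝ u x e⟫ := by
  rw [hu.hasFDerivAt.norm_sq.fderiv]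
  simp

theorem ContDiffAt.sqrt_norm_sq_add_sq {n : WithTop ℕ∞} (hu : ContDiffAt ℝ n u x) {ε : ℝ}
    (hε : ε ≠ 0) : ContDiffAt ℝ n (fun y => √(‖u y‖ ^ 2 + ε ^ 2)) x :=
  ((hu.norm_sq ℝ).add contDiffAt_const).sqrt (by positivity)

theorem differentiableAt_fderiv_apply_of_contDiffAt (hu : ContDiffAt ℝ 2 u x) (e : E) :
    DifferentiableAt ℝ (fun y => fderiv ℝ u y e) x :=
  ((hu.fderiv_right one_add_one_eq_two.le).clm_apply contDiffAt_const).differentiableAt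
    one_ne_zero

theorem fderiv_fderiv_norm_sq_comp_apply (hu : ContDiffAt ℝ 2 u x) (e : E) :
    fderiv ℝ (fun y => fderiv ℝ (fun z => ‖u z‖ ^ 2) y e) x e =
      2 * (‖fderiv ℝ u x e‖ ^ 2 + ⟪u x, fderiv ℝ (fun y => fderiv ℝ u y e) x e⟫) := by
  have hfirst : (fun y => fderiv ℝ (fun z => ‖u z‖ ^ 2) y e) =ᶠ[nhds x]
      fun y => 2 * ⟪u y, fderiv ℝ u y e⟫ :=
    (hu.eventually (by simp)).mono fun y hy =>
      fderiv_norm_sq_comp_apply (hy.differentiableAt two_ne_zero) e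
  have hu₁ : DifferentiableAt ℝ u x := hu.differentiableAt two_ne_zero
  have hDu := differentiableAt_fderiv_apply_of_contDiffAt hu e
  rw [hfirst.fderiv_eq, fderiv_const_mul (hu₁.inner ℝ hDu), smul_apply, smul_eq_mul,
    fderiv_inner_apply ℝ hu₁ hDu, real_inner_self_eq_norm_sq]
  ring

theorem inner_le_sqrt_mul_fderiv_fderiv_sqrt (hu : ContDiffAt ℝ 2 u x) {ε : ℝ} (hε : ε ≠ 0)
    (e : E) :
    ⟪u x, fderiv ℝ (fun y => fderiv ℝ u y e) x e⟫ ≤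
      √(‖u x‖ ^ 2 + ε ^ 2) *
        fderiv ℝ (fun y => fderiv ℝ (fun z => √(‖u z‖ ^ 2 + ε ^ 2)) y e) x e := by
  set f : E → ℝ := fun z => √(‖u z‖ ^ 2 + ε ^ 2)
  set P := fderiv ℝ u x e
  set d := fderiv ℝ f x e
  have hpos : ∀ y, 0 < ‖u y‖ ^ 2 + ε ^ 2 := fun y => by positivity
  have hf : ContDiffAt ℝ 2 f x := hu.sqrt_norm_sq_add_sq hε
  have hfx : f x ^ 2 = ‖u x‖ ^ 2 + ε ^ 2 := Real.sq_sqrt (hpos x).le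
  have hsq : (fun y => ‖f y‖ ^ 2) = fun y => ‖u y‖ ^ 2 + ε ^ 2 := by
    funext y
    rw [Real.norm_eq_abs, sq_abs, Real.sq_sqrt (hpos y).le]
  have hfirst : ⟪u x, P⟫ = d * f x := by
    have h := fderiv_norm_sq_comp_apply (hf.differentiableAt two_ne_zero) e
    rw [hsq, fderiv_add_const, fderiv_norm_sq_comp_apply (hu.differentiableAt two_ne_zero)] at h
    simp only [RCLike.inner_apply, conj_trivial] at h
    exact mul_left_cancel₀ two_ne_zero h
  have hsecond : ‖P‖ ^ 2 + ⟪u x, fderiv ℝ (fun y => fderiv ℝ u y e) x e⟫ =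
      d ^ 2 + fderiv ℝ (fun y => fderiv ℝ f y e) x e * f x := by
    have h := fderiv_fderiv_norm_sq_comp_apply hf e
    simp only [hsq, fderiv_add_const] at h
    rw [fderiv_fderiv_norm_sq_comp_apply hu] at h
    simp only [RCLike.inner_apply, conj_trivial, Real.norm_eq_abs, sq_abs] at h
    exact mul_left_cancel₀ two_ne_zero h
  have hd : f x ^ 2 * d ^ 2 ≤ f x ^ 2 * ‖P‖ ^ 2 := calc
    f x ^ 2 * d ^ 2 = ⟪u x, P⟫ ^ 2 := by rw [hfirst]; ring
    _ ≤ (‖u x‖ * ‖P‖) ^ 2 := by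
      rw [← sq_abs]; exact pow_le_pow_left₀ (abs_nonneg _) (abs_real_inner_le_norm _ _) 2
    _ ≤ f x ^ 2 * ‖P‖ ^ 2 := by rw [mul_pow, hfx]; gcongr; linarith [sq_nonneg ε]
  have hd' : d ^ 2 ≤ ‖P‖ ^ 2 := le_of_mul_le_mul_left hd (by positivity)
  linarith

end

theorem stmt_2_general (n : ℕ) (ψ : EuclideanSpace ℝ (Fin n) → ℂ)
    (x : EuclideanSpace ℝ (Fin n)) (U : Set (EuclideanSpace ℝ (Fin n)))
    (hU : U ∈ nhds x) (hψ : ContDiffOn ℝ 2 ψ U) (ε : ℝ) (hε : 0 < ε) :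
    (∃ V ∈ nhds x, ContDiffOn ℝ 2 (fun y => Real.sqrt (‖ψ y‖ ^ 2 + ε ^ 2)) V) ∧
    Real.sqrt (‖ψ x‖ ^ 2 + ε ^ 2) *
        eucLap (fun y => Real.sqrt (‖ψ y‖ ^ 2 + ε ^ 2)) x ≥
      ((starRingEnd ℂ) (ψ x) * eucLap ψ x).re := by
  have hψx : ContDiffAt ℝ 2 ψ x := hψ.contDiffAt hU
  refine ⟨(hψx.sqrt_norm_sq_add_sq hε.ne').contDiffOn le_rfl (by simp), ?_⟩
  rw [ge_iff_le, eucLap, eucLap, Finset.mul_sum, Finset.mul_sum, Complex.re_sum]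
  gcongr with i
  rw [mul_comm, ← Complex.inner]
  exact inner_le_sqrt_mul_fderiv_fderiv_sqrt hψx hε.ne' _

theorem stmt_2 (n : ℕ) (hn : 1 ≤ n) (ψ : EuclideanSpace ℝ (Fin n) → ℂ)
    (x : EuclideanSpace ℝ (Fin n)) (U : Set (EuclideanSpace ℝ (Fin n)))
    (hU : U ∈ nhds x) (hψ : ContDiffOn ℝ 2 ψ U) (ε : ℝ) (hε : 0 < ε) :
    (∃ V ∈ nhds x, ContDiffOn ℝ 2 (fun y => Real.sqrt (‖ψ y‖ ^ 2 + ε ^ 2)) V) ∧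
    Real.sqrt (‖ψ x‖ ^ 2 + ε ^ 2) *
        eucLap (fun y => Real.sqrt (‖ψ y‖ ^ 2 + ε ^ 2)) x ≥
      ((starRingEnd ℂ) (ψ x) * eucLap ψ x).re :=
  stmt_2_general n ψ x U hU hψ ε hε
end

section
/- (Kato's inequality, distributional form.) Let n ≥ 1, let ψ : ℝⁿ → ℂ be smooth, and let φ : ℝⁿ → ℝ be smooth, compactly supported, and nonnegative. Then ∫_{ℝⁿ} |ψ(x)| · Δφ(x) dx ≥ ∫_{ℝⁿ} Re( sgn(ψ)(x) · Δψ(x) ) · φ(x) dx. -/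
open Complex MeasureTheory

/-- `sgn(ψ)(x) = conj(ψ(x))/|ψ(x)|` if `ψ(x) ≠ 0`, and `0` otherwise. -/
noncomputable def sgnFn {n : ℕ} (ψ : EuclideanSpace ℝ (Fin n) → ℂ)
    (x : EuclideanSpace ℝ (Fin n)) : ℂ :=
  if ψ x = 0 then 0 else (starRingEnd ℂ) (ψ x) / ((‖ψ x‖ : ℝ) : ℂ)

open Set
open scoped ContDiff

lemma one_le_inf : (∞ : WithTop ℕ∞) ≠ 0 := by simp
lemma infp1_le : (∞ : WithTop ℕ∞) + 1 ≤ ∞ := by exact_mod_cast (le_top : ((⊤:ℕ∞)+1 : ℕ∞) ≤ ⊤)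

variable {n : ℕ}
local notation "𝕏" => EuclideanSpace ℝ (Fin n)

noncomputable def dV {F : Type*} [NormedAddCommGroup F] [NormedSpace ℝ F]
    (f : 𝕏 → F) (v : 𝕏) (x : 𝕏) : F := fderiv ℝ f x v

lemma contDiff_dV {F : Type*} [NormedAddCommGroup F] [NormedSpace ℝ F]
    {f : 𝕏 → F} (hf : ContDiff ℝ ∞ f) (v : 𝕏) : ContDiff ℝ ∞ (dV f v) :=
  (ContinuousLinearMap.apply ℝ F v).contDiff.comp (hf.fderiv_right infp1_le)

lemma dV_sq_add_sq {a b : 𝕏 → ℝ} (ha : ContDiff ℝ ∞ a) (hb : ContDiff ℝ ∞ b) (v y : 𝕏) :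
    dV (fun z => a z ^ 2 + b z ^ 2) v y
      = 2 * a y * dV a v y + 2 * b y * dV b v y := by
  have hay := ((ha.differentiable one_le_inf) y).hasFDerivAt
  have hby := ((hb.differentiable one_le_inf) y).hasFDerivAt
  have H : HasFDerivAt (fun z => a z ^ 2 + b z ^ 2)
      (((2 * a y) • fderiv ℝ a y) + ((2 * b y) • fderiv ℝ b y)) y := by
    have Ha : HasFDerivAt (fun z => a z ^ 2) ((2 * a y) • fderiv ℝ a y) y := by
      simpa [pow_two, two_mul, add_smul] using hay.fun_mul hay
    have Hb : HasFDerivAt (fun z => b z ^ 2) ((2 * b y) • fderiv ℝ b y) y := by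
      simpa [pow_two, two_mul, add_smul] using hby.fun_mul hby
    exact Ha.add Hb
  simp [dV, H.fderiv]

lemma dV_sqrt {ε : ℝ} {u : 𝕏 → ℝ} (hu : ContDiff ℝ ∞ u) (hpos : ∀ z, 0 < u z + ε ^ 2) (v y : 𝕏) :
    dV (fun z => Real.sqrt (u z + ε ^ 2)) v y
      = (2 * Real.sqrt (u y + ε ^ 2))⁻¹ * dV u v y := by
  have huy := ((hu.differentiable one_le_inf) y).hasFDerivAt
  have hw : HasFDerivAt (fun z => u z + ε ^ 2) (fderiv ℝ u y) y := huy.add_const _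
  have hs : HasDerivAt Real.sqrt (1 / (2 * Real.sqrt (u y + ε ^ 2))) (u y + ε ^ 2) :=
    Real.hasDerivAt_sqrt (hpos y).ne'
  have H : HasFDerivAt (fun z => Real.sqrt (u z + ε ^ 2))
      ((1 / (2 * Real.sqrt (u y + ε ^ 2))) • fderiv ℝ u y) y := hs.comp_hasFDerivAt y hw
  simp [dV, H.fderiv, mul_inv]

-- second derivative of a product expression: fderiv of (fun y => c y * d y) applied to v
lemma dV_mul {c d : 𝕏 → ℝ} {x : 𝕏} (hc : DifferentiableAt ℝ c x) (hd : DifferentiableAt ℝ d x)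
    (v : 𝕏) :
    dV (fun y => c y * d y) v x = c x * dV d v x + d x * dV c v x := by
  simp [dV, fderiv_fun_mul hc hd]

lemma dV_add {c d : 𝕏 → ℝ} {x : 𝕏} (hc : DifferentiableAt ℝ c x) (hd : DifferentiableAt ℝ d x)
    (v : 𝕏) :
    dV (fun y => c y + d y) v x = dV c v x + dV d v x := by
  simp [dV, fderiv_fun_add hc hd]

lemma dV_inv {c : 𝕏 → ℝ} {x : 𝕏} (hc : DifferentiableAt ℝ c x) (hcx : c x ≠ 0) (v : 𝕏) :
    dV (fun y => (c y)⁻¹) v x = -((c x)^2)⁻¹ * dV c v x := by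
  have H : HasFDerivAt (fun y => (c y)⁻¹) ((-((c x) ^ 2)⁻¹) • fderiv ℝ c x) x :=
    (hasDerivAt_inv hcx).comp_hasFDerivAt x hc.hasFDerivAt
  simp [dV, H.fderiv]

lemma re_conj_div_mul (z w : ℂ) (r : ℝ) :
    ((starRingEnd ℂ z / (r : ℂ)) * w).re = (z.re * w.re + z.im * w.im) / r := by
  have h : (starRingEnd ℂ z / (r : ℂ)) * w = ((r⁻¹ : ℝ) : ℂ) * (starRingEnd ℂ z * w) := by
    push_cast; ring
  rw [h]
  simp only [Complex.mul_re, Complex.mul_im, Complex.ofReal_re, Complex.ofReal_im,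
    Complex.conj_re, Complex.conj_im, div_eq_inv_mul]
  ring

lemma re_fderiv {n : ℕ} {h : EuclideanSpace ℝ (Fin n) → ℂ} (hh : Differentiable ℝ h)
    (v x : EuclideanSpace ℝ (Fin n)) :
    dV (fun y => (h y).re) v x = (dV h v x).re := by
  have h1 : fderiv ℝ (fun y => (h y).re) x = Complex.reCLM.comp (fderiv ℝ h x) :=
    (Complex.reCLM.hasFDerivAt.comp x (hh x).hasFDerivAt).fderiv
  simp [dV, h1]

lemma im_fderiv {n : ℕ} {h : EuclideanSpace ℝ (Fin n) → ℂ} (hh : Differentiable ℝ h)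
    (v x : EuclideanSpace ℝ (Fin n)) :
    dV (fun y => (h y).im) v x = (dV h v x).im := by
  have h1 : fderiv ℝ (fun y => (h y).im) x = Complex.imCLM.comp (fderiv ℝ h x) :=
    (Complex.imCLM.hasFDerivAt.comp x (hh x).hasFDerivAt).fderiv
  simp [dV, h1]


section key
variable {n : ℕ}

lemma eucLap_eq_sum_dV {E : Type*} [NormedAddCommGroup E] [NormedSpace ℝ E]
    (f : EuclideanSpace ℝ (Fin n) → E) (x : EuclideanSpace ℝ (Fin n)) :
    eucLap f x = ∑ i : Fin n, dV (dV f (EuclideanSpace.single i (1:ℝ))) (EuclideanSpace.single i (1:ℝ)) x := rfl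

lemma key_ineq {ψ : EuclideanSpace ℝ (Fin n) → ℂ} (hψ : ContDiff ℝ ∞ ψ)
    {ε : ℝ} (hε : 0 < ε) (x : EuclideanSpace ℝ (Fin n)) :
    ((starRingEnd ℂ (ψ x) / ((Real.sqrt ((ψ x).re ^ 2 + (ψ x).im ^ 2 + ε ^ 2) : ℝ) : ℂ))
        * eucLap ψ x).re
      ≤ eucLap (fun z => Real.sqrt ((ψ z).re ^ 2 + (ψ z).im ^ 2 + ε ^ 2)) x := by
  set a : EuclideanSpace ℝ (Fin n) → ℝ := fun z => (ψ z).re with ha_def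
  set b : EuclideanSpace ℝ (Fin n) → ℝ := fun z => (ψ z).im with hb_def
  have ha : ContDiff ℝ ∞ a := Complex.reCLM.contDiff.comp hψ
  have hb : ContDiff ℝ ∞ b := Complex.imCLM.contDiff.comp hψ
  set u : EuclideanSpace ℝ (Fin n) → ℝ := fun z => a z ^ 2 + b z ^ 2 with hu_def
  have hu : ContDiff ℝ ∞ u := (ha.pow 2).add (hb.pow 2)
  have hpos : ∀ z, 0 < u z + ε ^ 2 := fun z => by positivity
  set s : EuclideanSpace ℝ (Fin n) → ℝ := fun z => Real.sqrt (u z + ε ^ 2) with hs_def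
  have hs : ContDiff ℝ ∞ s := by
    rw [contDiff_iff_contDiffAt]
    intro z
    exact (Real.contDiffAt_sqrt (hpos z).ne').comp z ((hu.contDiffAt).add contDiffAt_const)
  have hspos : ∀ z, 0 < s z := fun z => Real.sqrt_pos.2 (hpos z)
  have hssq : ∀ z, s z ^ 2 = u z + ε ^ 2 := fun z => Real.sq_sqrt (hpos z).le
  -- per-direction inequality
  have main : ∀ v : EuclideanSpace ℝ (Fin n),
      (a x * dV (dV a v) v x + b x * dV (dV b v) v x) / s x ≤ dV (dV s v) v x := by
    intro v
    have hdu : dV u v = fun y => 2 * a y * dV a v y + 2 * b y * dV b v y :=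
      funext fun y => dV_sq_add_sq ha hb v y
    have hds : dV s v = fun y => (2 * s y)⁻¹ * dV u v y :=
      funext fun y => dV_sqrt hu hpos v y
    -- differentiability helpers
    have da : Differentiable ℝ a := ha.differentiable one_le_inf
    have db : Differentiable ℝ b := hb.differentiable one_le_inf
    have dA : Differentiable ℝ (dV a v) := (contDiff_dV ha v).differentiable one_le_inf
    have dB : Differentiable ℝ (dV b v) := (contDiff_dV hb v).differentiable one_le_inf
    have dU : Differentiable ℝ (dV u v) := (contDiff_dV hu v).differentiable one_le_inf
    have dS : Differentiable ℝ s := hs.differentiable one_le_inf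
    -- second derivative of u
    have hddu : dV (dV u v) v x
        = 2 * (dV a v x) ^ 2 + 2 * (dV b v x) ^ 2
          + 2 * a x * dV (dV a v) v x + 2 * b x * dV (dV b v) v x := by
      rw [hdu]
      have h1 : dV (fun y => 2 * a y * dV a v y + 2 * b y * dV b v y) v x
          = dV (fun y => 2 * a y * dV a v y) v x + dV (fun y => 2 * b y * dV b v y) v x :=
        dV_add ((da x).const_mul 2 |>.mul (dA x)) ((db x).const_mul 2 |>.mul (dB x)) v
      have h2 : dV (fun y => 2 * a y * dV a v y) v x
          = 2 * a x * dV (dV a v) v x + dV a v x * dV (fun y => 2 * a y) v x :=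
        dV_mul ((da x).const_mul 2) (dA x) v
      have h3 : dV (fun y => 2 * b y * dV b v y) v x
          = 2 * b x * dV (dV b v) v x + dV b v x * dV (fun y => 2 * b y) v x :=
        dV_mul ((db x).const_mul 2) (dB x) v
      have h4 : dV (fun y => 2 * a y) v x = 2 * dV a v x := by
        simp [dV, fderiv_const_mul (da x)]
      have h5 : dV (fun y => 2 * b y) v x = 2 * dV b v x := by
        simp [dV, fderiv_const_mul (db x)]
      rw [h1, h2, h3, h4, h5]; ring
    -- second derivative of s
    have hdds : dV (dV s v) v x
        = (2 * s x)⁻¹ * dV (dV u v) v x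
          + dV u v x * (-(((2 * s x) ^ 2)⁻¹) * (2 * dV s v x)) := by
      conv_lhs => rw [hds]
      have hc : DifferentiableAt ℝ (fun y => (2 * s y)⁻¹) x :=
        ((dS x).const_mul 2).inv (by positivity)
      have h1 : dV (fun y => (2 * s y)⁻¹ * dV u v y) v x
          = (2 * s x)⁻¹ * dV (dV u v) v x + dV u v x * dV (fun y => (2 * s y)⁻¹) v x :=
        dV_mul hc (dU x) v
      have h2 : dV (fun y => (2 * s y)⁻¹) v x
          = -(((2 * s x) ^ 2)⁻¹) * dV (fun y => 2 * s y) v x :=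
        dV_inv ((dS x).const_mul 2) (by positivity) v
      have h3 : dV (fun y => 2 * s y) v x = 2 * dV s v x := by
        simp [dV, fderiv_const_mul (dS x)]
      rw [h1, h2, h3]
    -- the value of dV s v x
    have hdsx : dV s v x = (2 * s x)⁻¹ * dV u v x := by rw [hds]
    have hdux : dV u v x = 2 * a x * dV a v x + 2 * b x * dV b v x := by rw [hdu]
    set A := dV a v x; set B := dV b v x
    set A' := dV (dV a v) v x; set B' := dV (dV b v) v x
    set aa := a x; set bb := b x; set sx := s x
    have h1 : 0 < sx := hspos x
    have h2 : sx ^ 2 = aa ^ 2 + bb ^ 2 + ε ^ 2 := hssq x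
    have hne : sx ≠ 0 := h1.ne'
    have hsx3 : (0:ℝ) < sx ^ 3 := by positivity
    have E1 : dV (dV s v) v x - (aa * A' + bb * B') / sx
        = (A ^ 2 + B ^ 2) / sx - (aa * A + bb * B) ^ 2 / sx ^ 3 := by
      rw [hdds, hddu, hdsx, hdux]
      field_simp
      ring
    have E2 : (aa * A + bb * B) ^ 2 / sx ^ 3 ≤ (A ^ 2 + B ^ 2) / sx := by
      rw [div_le_div_iff₀ hsx3 h1]
      have h3 : (A ^ 2 + B ^ 2) * sx ^ 3
          = ((aa * B - bb * A) ^ 2 + ε ^ 2 * (A ^ 2 + B ^ 2) + (aa * A + bb * B) ^ 2) * sx := by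
        have h4 : sx ^ 3 = sx ^ 2 * sx := by ring
        rw [h4, h2]; ring
      rw [h3]
      have hbr : 0 ≤ ((aa * B - bb * A) ^ 2 + ε ^ 2 * (A ^ 2 + B ^ 2)) * sx := by positivity
      nlinarith [hbr]
    linarith [E1, E2]
  -- sum over directions
  have hre : (eucLap ψ x).re
      = ∑ i : Fin n, dV (dV a (EuclideanSpace.single i (1:ℝ))) (EuclideanSpace.single i (1:ℝ)) x := by
    rw [eucLap_eq_sum_dV, Complex.re_sum]
    refine Finset.sum_congr rfl fun i _ => ?_
    have h1 : dV a (EuclideanSpace.single i (1:ℝ))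
        = fun y => (dV ψ (EuclideanSpace.single i (1:ℝ)) y).re :=
      funext fun y => re_fderiv (hψ.differentiable one_le_inf) _ y
    rw [h1]
    exact (re_fderiv ((contDiff_dV hψ _).differentiable one_le_inf) _ x).symm
  have him : (eucLap ψ x).im
      = ∑ i : Fin n, dV (dV b (EuclideanSpace.single i (1:ℝ))) (EuclideanSpace.single i (1:ℝ)) x := by
    rw [eucLap_eq_sum_dV, Complex.im_sum]
    refine Finset.sum_congr rfl fun i _ => ?_
    have h1 : dV b (EuclideanSpace.single i (1:ℝ))
        = fun y => (dV ψ (EuclideanSpace.single i (1:ℝ)) y).im :=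
      funext fun y => im_fderiv (hψ.differentiable one_le_inf) _ y
    rw [h1]
    exact (im_fderiv ((contDiff_dV hψ _).differentiable one_le_inf) _ x).symm
  show ((starRingEnd ℂ (ψ x) / ((s x : ℝ) : ℂ)) * eucLap ψ x).re ≤ eucLap s x
  rw [re_conj_div_mul]
  calc ((ψ x).re * (eucLap ψ x).re + (ψ x).im * (eucLap ψ x).im) / s x
      = ∑ i : Fin n, (a x * dV (dV a (EuclideanSpace.single i (1:ℝ))) (EuclideanSpace.single i (1:ℝ)) x
          + b x * dV (dV b (EuclideanSpace.single i (1:ℝ))) (EuclideanSpace.single i (1:ℝ)) x) / s x := by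
        rw [hre, him, Finset.mul_sum, Finset.mul_sum, ← Finset.sum_add_distrib, Finset.sum_div]
    _ ≤ ∑ i : Fin n, dV (dV s (EuclideanSpace.single i (1:ℝ))) (EuclideanSpace.single i (1:ℝ)) x :=
        Finset.sum_le_sum fun i _ => main _
    _ = eucLap s x := (eucLap_eq_sum_dV s x).symm
end key


-- ## compact support lemmas
lemma hcs_dV {n : ℕ} {F : Type*} [NormedAddCommGroup F] [NormedSpace ℝ F]
    {f : EuclideanSpace ℝ (Fin n) → F} (hf : HasCompactSupport f) (v : EuclideanSpace ℝ (Fin n)) :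
    HasCompactSupport (dV f v) :=
  (hf.fderiv ℝ).comp_left (g := fun L : EuclideanSpace ℝ (Fin n) →L[ℝ] F => L v) rfl

lemma tsupport_dV_subset {n : ℕ} {F : Type*} [NormedAddCommGroup F] [NormedSpace ℝ F]
    (f : EuclideanSpace ℝ (Fin n) → F) (v : EuclideanSpace ℝ (Fin n)) :
    tsupport (dV f v) ⊆ tsupport f := by
  apply closure_minimal _ (isClosed_tsupport f)
  intro x hx
  have : fderiv ℝ f x ≠ 0 := by
    intro h; exact hx (by simp [dV, h])
  exact support_fderiv_subset ℝ this

lemma lap_eq_zero_of_nmem {n : ℕ} {F : Type*} [NormedAddCommGroup F] [NormedSpace ℝ F]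
    (f : EuclideanSpace ℝ (Fin n) → F) {x : EuclideanSpace ℝ (Fin n)}
    (hx : x ∉ tsupport f) : eucLap f x = 0 := by
  rw [eucLap_eq_sum_dV]
  refine Finset.sum_eq_zero fun i _ => ?_
  by_contra h
  exact hx (tsupport_dV_subset f _ (tsupport_dV_subset (dV f _) _ (subset_tsupport _ h)))

lemma cont_lap {n : ℕ} {F : Type*} [NormedAddCommGroup F] [NormedSpace ℝ F]
    {f : EuclideanSpace ℝ (Fin n) → F} (hf : ContDiff ℝ ∞ f) : Continuous (eucLap f) := by
  have : eucLap f = fun x => ∑ i : Fin n,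
      dV (dV f (EuclideanSpace.single i (1:ℝ))) (EuclideanSpace.single i (1:ℝ)) x := rfl
  rw [this]
  exact continuous_finset_sum _ fun i _ => (contDiff_dV (contDiff_dV hf _) _).continuous

lemma hcs_lap {n : ℕ} {F : Type*} [NormedAddCommGroup F] [NormedSpace ℝ F]
    {f : EuclideanSpace ℝ (Fin n) → F} (hf : HasCompactSupport f) :
    HasCompactSupport (eucLap f) := by
  apply HasCompactSupport.intro hf
  intro x hx
  exact lap_eq_zero_of_nmem f hx

-- ## integration by parts
lemma ibp_once {n : ℕ} {f g : EuclideanSpace ℝ (Fin n) → ℝ}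
    (hf : ContDiff ℝ ∞ f) (hfc : HasCompactSupport f)
    (hg : ContDiff ℝ ∞ g) (hgc : HasCompactSupport g) (v : EuclideanSpace ℝ (Fin n)) :
    ∫ x, dV f v x * g x = -∫ x, dV g v x * f x := by
  obtain ⟨C, hC⟩ := hf.lipschitzWith_of_hasCompactSupport hfc one_le_inf
  obtain ⟨D, hD⟩ := hg.lipschitzWith_of_hasCompactSupport hgc one_le_inf
  have h := hC.integral_lineDeriv_mul_eq (μ := (volume : Measure (EuclideanSpace ℝ (Fin n)))) hD hgc v
  have h1 : ∀ x : EuclideanSpace ℝ (Fin n), lineDeriv ℝ f x v = dV f v x := fun x =>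
    ((hf.differentiable one_le_inf).differentiableAt).lineDeriv_eq_fderiv
  have h2 : ∀ x : EuclideanSpace ℝ (Fin n), lineDeriv ℝ g x (-v) = -dV g v x := fun x => by
    rw [((hg.differentiable one_le_inf).differentiableAt).lineDeriv_eq_fderiv, map_neg]; rfl
  simp only [h1, h2, neg_mul] at h
  rw [h, integral_neg]

lemma ibp_twice {n : ℕ} {f g : EuclideanSpace ℝ (Fin n) → ℝ}
    (hf : ContDiff ℝ ∞ f) (hfc : HasCompactSupport f)
    (hg : ContDiff ℝ ∞ g) (hgc : HasCompactSupport g) (v : EuclideanSpace ℝ (Fin n)) :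
    ∫ x, dV (dV f v) v x * g x = ∫ x, dV (dV g v) v x * f x := by
  rw [ibp_once (contDiff_dV hf v) (hcs_dV hfc v) hg hgc v,
      ibp_once (contDiff_dV hg v) (hcs_dV hgc v) hf hfc v]
  congr 1
  exact integral_congr_ae (Filter.Eventually.of_forall fun x => mul_comm _ _)

lemma ibp_lap {n : ℕ} {f g : EuclideanSpace ℝ (Fin n) → ℝ}
    (hf : ContDiff ℝ ∞ f) (hfc : HasCompactSupport f)
    (hg : ContDiff ℝ ∞ g) (hgc : HasCompactSupport g) :
    ∫ x, eucLap f x * g x = ∫ x, eucLap g x * f x := by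
  have key : ∀ (p q : EuclideanSpace ℝ (Fin n) → ℝ), ContDiff ℝ ∞ p → HasCompactSupport p →
      Continuous q → ∫ x, eucLap p x * q x
        = ∑ i : Fin n, ∫ x, dV (dV p (EuclideanSpace.single i (1:ℝ))) (EuclideanSpace.single i (1:ℝ)) x * q x := by
    intro p q hp hpc hq
    rw [← integral_finset_sum]
    · congr 1; funext x; rw [eucLap_eq_sum_dV, Finset.sum_mul]
    · intro i _
      apply Continuous.integrable_of_hasCompactSupport
      · exact ((contDiff_dV (contDiff_dV hp _) _).continuous).mul hq
      · exact (hcs_dV (hcs_dV hpc _) _).mul_right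
  rw [key f g hf hfc (hg.continuous), key g f hg hgc (hf.continuous)]
  exact Finset.sum_congr rfl fun i _ => ibp_twice hf hfc hg hgc _

theorem stmt_4 (n : ℕ) (hn : 1 ≤ n) (ψ : EuclideanSpace ℝ (Fin n) → ℂ)
    (hψ : ContDiff ℝ (⊤ : ℕ∞) ψ) (φ : EuclideanSpace ℝ (Fin n) → ℝ)
    (hφ : ContDiff ℝ (⊤ : ℕ∞) φ) (hφc : HasCompactSupport φ) (hφ0 : ∀ x, 0 ≤ φ x) :
    ∫ x, ‖ψ x‖ * eucLap φ x ≥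
      ∫ x, (sgnFn ψ x * eucLap ψ x).re * φ x := by
  classical
  replace hψ : ContDiff ℝ ∞ ψ := hψ.of_le (by simp)
  replace hφ : ContDiff ℝ ∞ φ := hφ.of_le (by simp)
  set S : ℝ → EuclideanSpace ℝ (Fin n) → ℝ :=
    fun ε z => Real.sqrt ((ψ z).re ^ 2 + (ψ z).im ^ 2 + ε ^ 2) with hS_def
  have habs : ∀ x, ‖ψ x‖ = Real.sqrt ((ψ x).re ^ 2 + (ψ x).im ^ 2) := by
    intro x
    rw [Complex.norm_def, Complex.normSq_apply]
    congr 1; ring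
  have hSsm : ∀ {ε : ℝ}, 0 < ε → ContDiff ℝ ∞ (S ε) := by
    intro ε hε
    rw [contDiff_iff_contDiffAt]
    intro z
    have hpos : (0:ℝ) < (ψ z).re ^ 2 + (ψ z).im ^ 2 + ε ^ 2 := by positivity
    have hu : ContDiff ℝ ∞ (fun z => (ψ z).re ^ 2 + (ψ z).im ^ 2 + ε ^ 2) :=
      (((Complex.reCLM.contDiff.comp hψ).pow 2).add
        ((Complex.imCLM.contDiff.comp hψ).pow 2)).add contDiff_const
    exact (Real.contDiffAt_sqrt hpos.ne').comp z hu.contDiffAt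
  have hSpos : ∀ {ε : ℝ}, 0 < ε → ∀ x, 0 < S ε x := by
    intro ε hε x
    apply Real.sqrt_pos.2
    positivity
  have hS_ge_abs : ∀ (ε : ℝ) (x : _), ‖ψ x‖ ≤ S ε x := by
    intro ε x
    rw [habs]
    exact Real.sqrt_le_sqrt (by nlinarith [sq_nonneg ε])
  have hS_le : ∀ ε ∈ Set.Ioc (0:ℝ) 1, ∀ x, S ε x ≤ ‖ψ x‖ + 1 := by
    intro ε hε x
    rw [habs]
    set A := (ψ x).re ^ 2 + (ψ x).im ^ 2 with hA
    have hA0 : 0 ≤ A := by positivity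
    have h1 : A + ε ^ 2 ≤ (Real.sqrt A + 1) ^ 2 := by
      have := Real.sq_sqrt hA0
      nlinarith [Real.sqrt_nonneg A, hε.1, hε.2]
    calc Real.sqrt (A + ε ^ 2) ≤ Real.sqrt ((Real.sqrt A + 1) ^ 2) := Real.sqrt_le_sqrt h1
      _ = Real.sqrt A + 1 := Real.sqrt_sq (by positivity)
  -- cutoff
  obtain ⟨R, hR0, hRsub⟩ := hφc.isBounded.subset_ball_lt 0 0
  set bump : ContDiffBump (0 : EuclideanSpace ℝ (Fin n)) := ⟨R, R+1, hR0, lt_add_one R⟩ with hbump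
  set χ : EuclideanSpace ℝ (Fin n) → ℝ := fun x => bump x with hχ_def
  have hχsm : ContDiff ℝ ∞ χ := bump.contDiff
  have hχc : HasCompactSupport χ := bump.hasCompactSupport
  have hχ1 : ∀ y ∈ Metric.ball (0 : EuclideanSpace ℝ (Fin n)) R, χ y = 1 := fun y hy =>
    bump.one_of_mem_closedBall (Metric.ball_subset_closedBall hy)
  -- main chain for fixed ε
  have chain : ∀ ε : ℝ, 0 < ε →
      ∫ x, ((starRingEnd ℂ (ψ x) / ((S ε x : ℝ) : ℂ)) * eucLap ψ x).re * φ x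
        ≤ ∫ x, S ε x * eucLap φ x := by
    intro ε hε
    have hSsmε := hSsm hε
    set G : EuclideanSpace ℝ (Fin n) → ℝ := fun z => χ z * S ε z with hG_def
    have hGsm : ContDiff ℝ ∞ G := hχsm.mul hSsmε
    have hGc : HasCompactSupport G := hχc.mul_right
    have e1 : ∫ x, S ε x * eucLap φ x = ∫ x, G x * eucLap φ x := by
      apply integral_congr_ae (Filter.Eventually.of_forall fun x => ?_)
      by_cases hx : x ∈ tsupport φ
      · have h1 : χ x = 1 := hχ1 x (hRsub hx)
        simp only [hG_def, h1, one_mul]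
      · rw [lap_eq_zero_of_nmem φ hx, mul_zero, mul_zero]
    have e2 : ∫ x, G x * eucLap φ x = ∫ x, eucLap G x * φ x := by
      rw [ibp_lap hGsm hGc hφ hφc]
      exact integral_congr_ae (Filter.Eventually.of_forall fun x => mul_comm _ _)
    have e3 : ∫ x, eucLap G x * φ x = ∫ x, eucLap (S ε) x * φ x := by
      apply integral_congr_ae (Filter.Eventually.of_forall fun x => ?_)
      by_cases hx : φ x = 0
      · rw [hx, mul_zero, mul_zero]
      · have hxU : x ∈ Metric.ball (0 : EuclideanSpace ℝ (Fin n)) R :=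
          hRsub (subset_tsupport φ hx)
        have hfd : ∀ y ∈ Metric.ball (0 : EuclideanSpace ℝ (Fin n)) R,
            fderiv ℝ G y = fderiv ℝ (S ε) y := by
          intro y hy
          apply Filter.EventuallyEq.fderiv_eq
          filter_upwards [Metric.isOpen_ball.mem_nhds hy] with z hz
          simp only [hG_def, hχ1 z hz, one_mul]
        have hlap : eucLap G x = eucLap (S ε) x := by
          rw [eucLap_eq_sum_dV, eucLap_eq_sum_dV]
          refine Finset.sum_congr rfl fun i _ => ?_
          have h2 : dV G (EuclideanSpace.single i (1:ℝ))
              =ᶠ[nhds x] dV (S ε) (EuclideanSpace.single i (1:ℝ)) := by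
            filter_upwards [Metric.isOpen_ball.mem_nhds hxU] with z hz
            simp only [dV, hfd z hz]
          have h3 := h2.fderiv_eq (𝕜 := ℝ)
          simp only [dV, h3]
        rw [hlap]
    have int2 : Integrable (fun x => eucLap (S ε) x * φ x) := by
      apply Continuous.integrable_of_hasCompactSupport
      · exact (cont_lap hSsmε).mul hφ.continuous
      · exact hφc.mul_left
    have int1 : Integrable
        (fun x => ((starRingEnd ℂ (ψ x) / ((S ε x : ℝ) : ℂ)) * eucLap ψ x).re * φ x) := by
      apply Continuous.integrable_of_hasCompactSupport
      · apply Continuous.mul _ hφ.continuous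
        apply Complex.continuous_re.comp
        apply Continuous.mul _ (cont_lap hψ)
        apply Continuous.div
        · exact Complex.continuous_conj.comp hψ.continuous
        · exact Complex.continuous_ofReal.comp hSsmε.continuous
        · intro x
          exact_mod_cast Complex.ofReal_ne_zero.2 (hSpos hε x).ne'
      · exact hφc.mul_left
    have e4 : ∫ x, ((starRingEnd ℂ (ψ x) / ((S ε x : ℝ) : ℂ)) * eucLap ψ x).re * φ x
        ≤ ∫ x, eucLap (S ε) x * φ x := by
      apply integral_mono int1 int2
      intro x
      exact mul_le_mul_of_nonneg_right (key_ineq hψ hε x) (hφ0 x)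
    linarith [e1, e2, e3, e4]
  -- limits
  have T1 : Filter.Tendsto (fun ε : ℝ => ∫ x, S ε x * eucLap φ x)
      (nhdsWithin 0 (Set.Ioi 0)) (nhds (∫ x, ‖ψ x‖ * eucLap φ x)) := by
    apply tendsto_integral_filter_of_dominated_convergence
      (fun x => (‖ψ x‖ + 1) * |eucLap φ x|)
    · filter_upwards [self_mem_nhdsWithin] with ε (hε : (0:ℝ) < ε)
      exact (((hSsm hε).continuous).mul (cont_lap hφ)).aestronglyMeasurable
    · filter_upwards [Ioc_mem_nhdsGT one_pos] with ε hε
      apply Filter.Eventually.of_forall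
      intro x
      rw [Real.norm_eq_abs, abs_mul, _root_.abs_of_nonneg (Real.sqrt_nonneg _)]
      exact mul_le_mul_of_nonneg_right (hS_le ε hε x) (abs_nonneg _)
    · apply Continuous.integrable_of_hasCompactSupport
      · exact ((continuous_norm.comp hψ.continuous).add continuous_const).mul
          (cont_lap hφ).abs
      · exact ((hcs_lap hφc).abs).mul_left
    · apply Filter.Eventually.of_forall
      intro x
      apply Filter.Tendsto.mul_const
      have hc : Continuous fun ε : ℝ => Real.sqrt ((ψ x).re ^ 2 + (ψ x).im ^ 2 + ε ^ 2) :=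
        Real.continuous_sqrt.comp (continuous_const.add (continuous_pow 2))
      have h := (hc.tendsto 0).mono_left
        (nhdsWithin_le_nhds (s := Set.Ioi (0:ℝ)))
      have e : Real.sqrt ((ψ x).re ^ 2 + (ψ x).im ^ 2 + (0:ℝ) ^ 2) = ‖ψ x‖ := by
        rw [habs x]; norm_num
      rw [← e]; exact h
  have T2 : Filter.Tendsto
      (fun ε : ℝ => ∫ x, ((starRingEnd ℂ (ψ x) / ((S ε x : ℝ) : ℂ)) * eucLap ψ x).re * φ x)
      (nhdsWithin 0 (Set.Ioi 0)) (nhds (∫ x, (sgnFn ψ x * eucLap ψ x).re * φ x)) := by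
    apply tendsto_integral_filter_of_dominated_convergence
      (fun x => ‖eucLap ψ x‖ * φ x)
    · filter_upwards [self_mem_nhdsWithin] with ε (hε : (0:ℝ) < ε)
      apply Continuous.aestronglyMeasurable
      apply Continuous.mul _ hφ.continuous
      apply Complex.continuous_re.comp
      apply Continuous.mul _ (cont_lap hψ)
      apply Continuous.div
      · exact Complex.continuous_conj.comp hψ.continuous
      · exact Complex.continuous_ofReal.comp ((hSsm hε).continuous)
      · intro x
        exact_mod_cast Complex.ofReal_ne_zero.2 (hSpos hε x).ne'
    · filter_upwards [self_mem_nhdsWithin] with ε (hε : (0:ℝ) < ε)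
      apply Filter.Eventually.of_forall
      intro x
      rw [Real.norm_eq_abs, abs_mul, _root_.abs_of_nonneg (hφ0 x)]
      apply mul_le_mul_of_nonneg_right _ (hφ0 x)
      calc |((starRingEnd ℂ (ψ x) / ((S ε x : ℝ) : ℂ)) * eucLap ψ x).re|
          ≤ ‖(starRingEnd ℂ (ψ x) / ((S ε x : ℝ) : ℂ)) * eucLap ψ x‖ :=
            Complex.abs_re_le_norm _
        _ = ‖ψ x‖ / |S ε x| * ‖eucLap ψ x‖ := by
            rw [norm_mul, norm_div, Complex.norm_conj, Complex.norm_real, Real.norm_eq_abs]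
        _ ≤ 1 * ‖eucLap ψ x‖ := by
            apply mul_le_mul_of_nonneg_right _ (norm_nonneg _)
            rw [_root_.abs_of_pos (hSpos hε x), div_le_one (hSpos hε x)]
            exact hS_ge_abs ε x
        _ = ‖eucLap ψ x‖ := one_mul _
    · apply Continuous.integrable_of_hasCompactSupport
      · exact (continuous_norm.comp (cont_lap hψ)).mul hφ.continuous
      · exact hφc.mul_left
    · apply Filter.Eventually.of_forall
      intro x
      apply Filter.Tendsto.mul_const
      by_cases hx : ψ x = 0
      · have h0 : (sgnFn ψ x * eucLap ψ x).re = 0 := by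
          simp [sgnFn, hx]
        rw [h0]
        have hz : (fun ε : ℝ => ((starRingEnd ℂ (ψ x) / ((S ε x : ℝ) : ℂ)) * eucLap ψ x).re)
            = fun _ => (0:ℝ) := by
          funext ε; rw [hx]; simp
        rw [hz]
        exact tendsto_const_nhds
      · have hc : Continuous fun ε : ℝ => Real.sqrt ((ψ x).re ^ 2 + (ψ x).im ^ 2 + ε ^ 2) :=
          Real.continuous_sqrt.comp (continuous_const.add (continuous_pow 2))
        have hS0 : Filter.Tendsto (fun ε : ℝ => S ε x) (nhdsWithin 0 (Set.Ioi 0))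
            (nhds (‖ψ x‖)) := by
          have h := (hc.tendsto 0).mono_left
            (nhdsWithin_le_nhds (s := Set.Ioi (0:ℝ)))
          have e : Real.sqrt ((ψ x).re ^ 2 + (ψ x).im ^ 2 + (0:ℝ) ^ 2) = ‖ψ x‖ := by
            rw [habs x]; norm_num
          rw [← e]; exact h
        have habs_ne : ((‖ψ x‖ : ℝ) : ℂ) ≠ 0 := by
          exact_mod_cast Complex.ofReal_ne_zero.2 (norm_ne_zero_iff.mpr hx)
        have : Filter.Tendsto
            (fun ε : ℝ => ((starRingEnd ℂ (ψ x) / ((S ε x : ℝ) : ℂ)) * eucLap ψ x).re)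
            (nhdsWithin 0 (Set.Ioi 0))
            (nhds ((starRingEnd ℂ (ψ x) / ((‖ψ x‖ : ℝ) : ℂ) * eucLap ψ x).re)) := by
          apply Filter.Tendsto.comp Complex.continuous_re.continuousAt.tendsto
          apply Filter.Tendsto.mul_const
          exact Filter.Tendsto.div tendsto_const_nhds
            ((Complex.continuous_ofReal.tendsto _).comp hS0) habs_ne
        simpa [sgnFn, hx] using this
  rw [ge_iff_le]
  apply le_of_tendsto_of_tendsto T2 T1
  filter_upwards [self_mem_nhdsWithin] with ε (hε : (0:ℝ) < ε)
  exact chain ε hε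
end

section
/- (Regularized spectral zeta function of Δ + 9/4 on S⁴.) For every s ∈ ℂ with Re(s) > 2, (1/6) · ∑_{k=1}^∞ (k+1)(k+2)(2k+3) / (k + 3/2)^{2s} = (1/3)·(2^{2s−3} − 1)·ζ_R(2s − 3) − (1/3)·(2^{2s−3} − 1/4)·ζ_R(2s − 1) − (1/3)·(2/3)^{2s−3} + (1/8)·(2/3)^{2s}, where the powers of positive reals are principal complex powers and the series converges absolutely. -/
/-!
With `x = k + 5/2` the numerator is `(x - 1/2)(x + 1/2)(2x) = 2x³ - x/2`, so the series is
`2 ∑ x^{-(2s-3)} - ½ ∑ x^{-(2s-1)}`, a combination of two Hurwitz zeta values at `5/2`.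
Removing the even terms from `ζ(w)` gives `∑ₙ (n + 1/2)^{-w} = (2^w - 1) ζ(w)`, and dropping
its first two terms `2^w` and `(2/3)^w` gives the Hurwitz value at `5/2`. Absolute convergence
comes for free, since summability in `ℂ` is absolute.
-/

open Complex

namespace Complex

lemma pow_div_cpow {x : ℂ} (hx : x ≠ 0) (n : ℕ) (s : ℂ) : x ^ n / x ^ s = 1 / x ^ (s - n) := by
  rw [cpow_sub _ _ hx, cpow_natCast, one_div_div]

lemma cpow_add_natCast {x : ℂ} (hx : x ≠ 0) (s : ℂ) (n : ℕ) : x ^ (s + n) = x ^ s * x ^ n := by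
  rw [cpow_add _ _ hx, cpow_natCast]

lemma one_div_ofReal_cpow {a : ℝ} (ha : 0 ≤ a) (s : ℂ) :
    1 / (a : ℂ) ^ s = ((a⁻¹ : ℝ) : ℂ) ^ s := by
  rw [one_div, ofReal_inv, inv_cpow_ofReal_nonneg ha]

end Complex

section HurwitzHalf

variable {w : ℂ}

lemma hasSum_one_div_nat_cpow (hw : 1 < w.re) :
    HasSum (fun n : ℕ => 1 / (n : ℂ) ^ w) (riemannZeta w) := by
  rw [zeta_eq_tsum_one_div_nat_cpow hw]
  exact (summable_one_div_nat_cpow.mpr hw).hasSum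

lemma hasSum_one_div_two_mul_add_one_cpow (hw : 1 < w.re) :
    HasSum (fun n : ℕ => 1 / (2 * (n : ℂ) + 1) ^ w) ((1 - 1 / 2 ^ w) * riemannZeta w) := by
  have hζ := hasSum_one_div_nat_cpow hw
  have heven : HasSum (fun n : ℕ => 1 / ((2 * n : ℕ) : ℂ) ^ w) (1 / 2 ^ w * riemannZeta w) :=
    (hζ.mul_left _).congr_fun fun n => by
      rw [Nat.cast_mul, natCast_mul_natCast_cpow, Nat.cast_ofNat, one_div_mul_one_div]
  have hodd : Summable (fun n : ℕ => 1 / ((2 * n + 1 : ℕ) : ℂ) ^ w) :=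
    hζ.summable.comp_injective fun a b h => by omega
  have hsplit := hζ.unique (heven.even_add_odd hodd.hasSum)
  rw [show (1 - 1 / 2 ^ w) * riemannZeta w = ∑' n : ℕ, 1 / ((2 * n + 1 : ℕ) : ℂ) ^ w by
    linear_combination hsplit]
  exact hodd.hasSum.congr_fun fun n => by push_cast; rfl

lemma hasSum_one_div_nat_add_half_cpow (hw : 1 < w.re) :
    HasSum (fun n : ℕ => 1 / ((n : ℂ) + 1 / 2) ^ w) ((2 ^ w - 1) * riemannZeta w) := by
  have hscale (n : ℕ) : 1 / ((n : ℂ) + 1 / 2) ^ w = 2 ^ w * (1 / (2 * (n : ℂ) + 1) ^ w) := by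
    have : 2 * (n : ℂ) + 1 = ((2 : ℝ) : ℂ) * ((n + 1 / 2 : ℝ) : ℂ) := by push_cast; ring
    rw [this, mul_cpow_ofReal_nonneg (by norm_num) (by positivity)]
    push_cast
    field_simp
  rw [show (2 ^ w - 1) * riemannZeta w = 2 ^ w * ((1 - 1 / 2 ^ w) * riemannZeta w) by
    field_simp]
  exact ((hasSum_one_div_two_mul_add_one_cpow hw).mul_left _).congr_fun hscale

lemma hasSum_one_div_nat_add_five_halves_cpow (hw : 1 < w.re) :
    HasSum (fun n : ℕ => 1 / ((n : ℂ) + 5 / 2) ^ w)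
      ((2 ^ w - 1) * riemannZeta w - 2 ^ w - (2 / 3) ^ w) := by
  have h := (hasSum_nat_add_iff' 2).mpr (hasSum_one_div_nat_add_half_cpow hw)
  have h₀ : 1 / ((0 : ℂ) + 1 / 2) ^ w = 2 ^ w := by
    simpa using one_div_ofReal_cpow (a := 1 / 2) (by norm_num) w
  have h₁ : 1 / ((1 : ℂ) + 1 / 2) ^ w = (2 / 3) ^ w := by
    convert one_div_ofReal_cpow (a := 3 / 2) (by norm_num) w using 2 <;> norm_num
  rw [Finset.sum_range_succ, Finset.sum_range_one, Nat.cast_zero, Nat.cast_one, h₀, h₁,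
    sub_add_eq_sub_sub] at h
  exact h.congr_fun fun n => by push_cast; ring_nf

end HurwitzHalf

theorem stmt_14 (s : ℂ) (hs : 2 < s.re) :
    Summable (fun k : ℕ =>
      ‖(((k : ℂ) + 1 + 1) * ((k : ℂ) + 1 + 2) * (2 * ((k : ℂ) + 1) + 3)) /
        (((k : ℂ) + 1) + 3 / 2) ^ (2 * s)‖) ∧
    (1 / 6 : ℂ) * (∑' k : ℕ,
        (((k : ℂ) + 1 + 1) * ((k : ℂ) + 1 + 2) * (2 * ((k : ℂ) + 1) + 3)) /
          (((k : ℂ) + 1) + 3 / 2) ^ (2 * s)) =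
      (1 / 3 : ℂ) * ((2 : ℂ) ^ (2 * s - 3) - 1) * riemannZeta (2 * s - 3) -
        (1 / 3 : ℂ) * ((2 : ℂ) ^ (2 * s - 3) - 1 / 4) * riemannZeta (2 * s - 1) -
        (1 / 3 : ℂ) * ((2 : ℂ) / 3) ^ (2 * s - 3) +
        (1 / 8 : ℂ) * ((2 : ℂ) / 3) ^ (2 * s) := by
  have hw₃ : 1 < (2 * s - 3).re := by simp; linarith
  have hw₁ : 1 < (2 * s - 1).re := by simp; linarith
  have hterm (k : ℕ) :
      ((k : ℂ) + 1 + 1) * ((k : ℂ) + 1 + 2) * (2 * ((k : ℂ) + 1) + 3) /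
          (((k : ℂ) + 1) + 3 / 2) ^ (2 * s) =
        2 * (1 / ((k : ℂ) + 5 / 2) ^ (2 * s - 3)) -
          1 / 2 * (1 / ((k : ℂ) + 5 / 2) ^ (2 * s - 1)) := by
    have hx : (k : ℂ) + 5 / 2 ≠ 0 := by
      have : ((k + 5 / 2 : ℝ) : ℂ) ≠ 0 := ofReal_ne_zero.mpr (by positivity)
      simpa using this
    rw [show ((k : ℂ) + 1 + 1) * ((k : ℂ) + 1 + 2) * (2 * ((k : ℂ) + 1) + 3) =
        2 * ((k : ℂ) + 5 / 2) ^ 3 - 1 / 2 * ((k : ℂ) + 5 / 2) ^ 1 by ring,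
      show ((k : ℂ) + 1) + 3 / 2 = (k : ℂ) + 5 / 2 by ring,
      sub_div, mul_div_assoc, mul_div_assoc, pow_div_cpow hx, pow_div_cpow hx]
    norm_num
  have hsum := (((hasSum_one_div_nat_add_five_halves_cpow hw₃).mul_left 2).sub
    ((hasSum_one_div_nat_add_five_halves_cpow hw₁).mul_left (1 / 2))).congr_fun hterm
  refine ⟨summable_norm_iff.mpr hsum.summable, ?_⟩
  have h₂ : (2 : ℂ) ^ (2 * s - 1) = 2 ^ (2 * s - 3) * 2 ^ 2 := by
    rw [← cpow_add_natCast two_ne_zero]; ring_nf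
  have h₂₃ : ((2 : ℂ) / 3) ^ (2 * s) = (2 / 3) ^ (2 * s - 1) * (2 / 3) ^ 1 := by
    rw [← cpow_add_natCast (by norm_num)]; ring_nf
  rw [hsum.tsum_eq, h₂, h₂₃]
  ring
end

section
/- (Binomial expansion of the Hurwitz-type zeta series.) Let ρ be a real number with 0 < ρ < 1 and let w ∈ ℂ with Re(w) > 1. Then ∑_{k=1}^∞ (k + ρ)^{−w} = ∑_{m=0}^∞ (−1)^m · ( Γ(w+m) / (m! · Γ(w)) ) · ρ^m · ζ_R(w + m), where both series converge absolutely, ζ_R denotes the Riemann zeta function, Γ the complex Gamma function, and the powers of positive reals are principal complex powers. -/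
/-!
Write `(k + 1 + ρ)^(-w) = (k + 1)^(-w) (1 + ρ/(k + 1))^(-w)` and expand the second factor by the
binomial series. This gives the double series `∑_{k,m} C(-w, m) ρ^m (k + 1)^(-w-m)`, which is
absolutely summable because `|(k + 1)^(-w-m)| ≤ (k + 1)^(-Re w)` and `∑ |C(-w, m)| ρ^m < ∞` for
`ρ < 1`. Summing over `k` first instead produces `C(-w, m) ρ^m ζ(w + m)`, and
`C(-w, m) = (-1)^m Γ(w + m) / (m! Γ(w))`.
-/

open Complex

open scoped Nat in
theorem Complex.neg_one_pow_mul_Gamma_add_nat_div_eq_choose_neg {z : ℂ} (hz : ∀ k : ℕ, z ≠ -k)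
    (m : ℕ) : (-1) ^ m * (Gamma (z + m) / (m ! * Gamma z)) = Ring.choose (-z) m := by
  have hfac : (m ! : ℂ) ≠ 0 := by exact_mod_cast m.factorial_ne_zero
  have hmul : (m ! : ℂ) * Ring.multichoose z m = (ascPochhammer ℂ m).eval z := by
    rw [← nsmul_eq_mul, Ring.factorial_nsmul_multichoose_eq_ascPochhammer,
      Polynomial.ascPochhammer_smeval_eq_eval]
  rw [Ring.choose_neg, ← Ring.multichoose_eq, mul_comm (m ! : ℂ), ← div_div,
    Gamma_add_nat_div_Gamma_eq z hz, ← hmul, mul_div_cancel_left₀ _ hfac, Units.smul_def,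
    Int.coe_negOnePow_natCast, zsmul_eq_mul]
  push_cast
  ring

theorem Complex.ofReal_mul_cpow {r : ℝ} (hr : 0 < r) (u a : ℂ) :
    ((r : ℂ) * u) ^ a = (r : ℂ) ^ a * u ^ a := by
  rcases eq_or_ne u 0 with rfl | hu
  · rcases eq_or_ne a 0 with rfl | ha <;> simp [*]
  have hr' : (r : ℂ) ≠ 0 := ofReal_ne_zero.mpr hr.ne'
  rw [cpow_def_of_ne_zero (mul_ne_zero hr' hu), log_ofReal_mul hr hu, ofReal_log hr.le,
    add_mul, exp_add, ← cpow_def_of_ne_zero hr', ← cpow_def_of_ne_zero hu]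

theorem Complex.mem_eball_zero_one_of_norm_lt_one {z : ℂ} (hz : ‖z‖ < 1) :
    z ∈ Metric.eball (0 : ℂ) 1 := by
  rw [← ENNReal.ofReal_one, Metric.eball_ofReal]
  simpa using hz

theorem Complex.hasSum_choose_mul_pow {z : ℂ} (hz : ‖z‖ < 1) (a : ℂ) :
    HasSum (fun n : ℕ => Ring.choose a n * z ^ n) ((1 + z) ^ a) := by
  simpa [binomialSeries, FormalMultilinearSeries.coeff_ofScalars, mul_comm] using
    one_add_cpow_hasFPowerSeriesOnBall_zero.hasSum (mem_eball_zero_one_of_norm_lt_one hz)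

theorem Complex.summable_norm_choose_mul_pow {z : ℂ} (hz : ‖z‖ < 1) (a : ℂ) :
    Summable (fun n : ℕ => ‖Ring.choose a n * z ^ n‖) := by
  simpa [binomialSeries, FormalMultilinearSeries.coeff_ofScalars, mul_comm] using
    (binomialSeries ℂ a).summable_norm_apply <|
      Metric.eball_subset_eball binomialSeries_radius_ge_one (mem_eball_zero_one_of_norm_lt_one hz)

theorem Complex.hasSum_choose_mul_pow_mul_cpow {x : ℝ} (hx : 0 < x) {z : ℂ} (hz : ‖z‖ < x)
    (a : ℂ) :
    HasSum (fun n : ℕ => Ring.choose a n * z ^ n * (x : ℂ) ^ (a - n)) (((x : ℂ) + z) ^ a) := by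
  have hx' : (x : ℂ) ≠ 0 := ofReal_ne_zero.mpr hx.ne'
  have hzx : ‖z / x‖ < 1 := by
    rwa [norm_div, norm_real, Real.norm_of_nonneg hx.le, div_lt_one hx]
  have hterm (n : ℕ) :
      (x : ℂ) ^ a * (Ring.choose a n * (z / x) ^ n) = Ring.choose a n * z ^ n * x ^ (a - n) := by
    rw [cpow_sub _ _ hx', cpow_natCast, div_pow]
    field_simp
  have hsum : (x : ℂ) ^ a * (1 + z / x) ^ a = (x + z) ^ a := by
    rw [← ofReal_mul_cpow hx, mul_add, mul_one, mul_div_cancel₀ _ hx']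
  simpa only [hterm, hsum] using (hasSum_choose_mul_pow hzx a).mul_left ((x : ℂ) ^ a)

theorem hasSum_natCast_add_one_cpow_neg_riemannZeta {s : ℂ} (hs : 1 < s.re) :
    HasSum (fun k : ℕ => ((k : ℂ) + 1) ^ (-s)) (riemannZeta s) := by
  have hsum : Summable (fun k : ℕ => 1 / ((k : ℂ) + 1) ^ s) := by
    simpa [Function.comp_def] using
      ((summable_one_div_nat_cpow.mpr hs).comp_injective Nat.succ_injective)
  simpa [cpow_neg] using hsum.hasSum_iff.mpr (zeta_eq_tsum_one_div_nat_add_one_cpow hs).symm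

theorem summable_norm_tsum_of_summable_norm_prod {β γ E : Type*} [NormedAddCommGroup E]
    [CompleteSpace E] {f : β × γ → E} (hf : Summable (‖f ·‖)) :
    Summable fun b => ‖∑' c, f (b, c)‖ :=
  hf.prod.of_nonneg_of_le (fun _ => norm_nonneg _)
    fun b => norm_tsum_le_tsum_norm (hf.prod_factor b)

theorem norm_natCast_add_one_cpow_le {s : ℂ} {σ : ℝ} (h : s.re ≤ σ) (k : ℕ) :
    ‖((k : ℂ) + 1) ^ s‖ ≤ ((k : ℝ) + 1) ^ σ := by
  rw [← Nat.cast_succ, norm_natCast_cpow_of_pos k.succ_pos]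
  push_cast
  exact Real.rpow_le_rpow_of_exponent_le (by linarith [k.cast_nonneg (α := ℝ)]) h

theorem summable_norm_mul_natCast_add_one_cpow {c : ℕ → ℂ} (hc : Summable (‖c ·‖)) {s : ℂ}
    (hs : 1 < s.re) : Summable fun p : ℕ × ℕ => ‖c p.2 * ((p.1 : ℂ) + 1) ^ (-s - p.2)‖ := by
  have hzeta : Summable fun k : ℕ => ((k : ℝ) + 1) ^ (-s.re) := by
    simpa using (summable_nat_add_iff 1).mpr (Real.summable_nat_rpow.mpr (by linarith))
  refine (hzeta.mul_of_nonneg hc (fun _ => by positivity) fun _ => norm_nonneg _).of_nonneg_of_le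
    (fun _ => norm_nonneg _) fun p => ?_
  rw [norm_mul, mul_comm]
  gcongr
  exact norm_natCast_add_one_cpow_le (by simp) p.1

theorem stmt_15 (ρ : ℝ) (hρ0 : 0 < ρ) (hρ1 : ρ < 1) (w : ℂ) (hw : 1 < w.re) :
    Summable (fun k : ℕ => ‖(((k : ℂ) + 1) + (ρ : ℂ)) ^ (-w)‖) ∧
    Summable (fun m : ℕ =>
      ‖(-1 : ℂ) ^ m * (Complex.Gamma (w + m) / ((m.factorial : ℂ) * Complex.Gamma w)) *
        (ρ : ℂ) ^ m * riemannZeta (w + m)‖) ∧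
    (∑' k : ℕ, (((k : ℂ) + 1) + (ρ : ℂ)) ^ (-w)) =
      ∑' m : ℕ, (-1 : ℂ) ^ m * (Complex.Gamma (w + m) / ((m.factorial : ℂ) * Complex.Gamma w)) *
        (ρ : ℂ) ^ m * riemannZeta (w + m) := by
  have hw' : ∀ k : ℕ, w ≠ -k := by
    rintro k rfl
    simp only [neg_re, natCast_re] at hw
    linarith [k.cast_nonneg (α := ℝ)]
  set c : ℕ → ℂ := fun m => Ring.choose (-w) m * (ρ : ℂ) ^ m
  set f : ℕ × ℕ → ℂ := fun p => c p.2 * ((p.1 : ℂ) + 1) ^ (-w - p.2)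
  have hρ : ‖(ρ : ℂ)‖ < 1 := by rw [norm_real, Real.norm_eq_abs, abs_lt]; constructor <;> linarith
  have hf : Summable (‖f ·‖) :=
    summable_norm_mul_natCast_add_one_cpow (summable_norm_choose_mul_pow hρ _) hw
  have hrow (k : ℕ) : HasSum (fun m => f (k, m)) (((k : ℂ) + 1 + ρ) ^ (-w)) := by
    have hk : ‖(ρ : ℂ)‖ < (k : ℝ) + 1 := by linarith [k.cast_nonneg (α := ℝ)]
    simpa [f, c] using hasSum_choose_mul_pow_mul_cpow (by positivity) hk (-w)
  have hcol (m : ℕ) : HasSum (fun k => f (k, m))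
      ((-1 : ℂ) ^ m * (Gamma (w + m) / ((m.factorial : ℂ) * Gamma w)) *
        (ρ : ℂ) ^ m * riemannZeta (w + m)) := by
    have hwm : 1 < (w + m).re := by
      simp only [add_re, natCast_re]
      linarith [m.cast_nonneg (α := ℝ)]
    rw [neg_one_pow_mul_Gamma_add_nat_div_eq_choose_neg hw']
    simpa only [f, c, neg_add'] using
      (hasSum_natCast_add_one_cpow_neg_riemannZeta hwm).mul_left (c m)
  refine ⟨?_, ?_, ?_⟩
  · simpa only [(hrow _).tsum_eq] using summable_norm_tsum_of_summable_norm_prod hf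
  · simpa only [Function.comp_apply, Prod.swap_prod_mk, (hcol _).tsum_eq] using
      summable_norm_tsum_of_summable_norm_prod (f := f ∘ Prod.swap)
        (hf.comp_injective Prod.swap_injective)
  · simp only [← (hrow _).tsum_eq, ← (hcol _).tsum_eq]
    exact (hf.of_norm.tsum_comm (f := fun k m => f (k, m))).symm
end
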